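/- arXiv:1909.02259 — 7 statements merged into one kernel-verified Lean document; each statement's English description precedes it below -/
import Mathlib

section
/- If F is a connected Set-functor (F(1) ≅ 1) such that the unique natural transformation ι : Id → F has some component ι_X that is not injective for a set X with at least two elements, then every component ι_Y is a constant map. -/
open CategoryTheory

universe u

lemma CategoryTheory.NatTrans.app_apply_eq_of_app_apply_eq {F : Type u ⥤ Type u}
    (ι : 𝟭 (Type u) ⟶ F) {X Y : Type u} {a b : X} (hab : ι.app X a = ι.app X b) (f : X → Y) :
    ι.app Y (f a) = ι.app Y (f b) := by
  have naturality (x : X) : ι.app Y (f x) = F.map (TypeCat.ofHom f) (ι.app X x) :=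
    types_congr_hom (ι.naturality (TypeCat.ofHom f)) x
  rw [naturality, naturality, hab]

theorem noninjective_unit_implies_all_components_constant_general
    (F : Type u ⥤ Type u)
    (ι : 𝟭 (Type u) ⟶ F)
    (X : Type u)
    (hnotinj : ¬ Function.Injective (ι.app X)) :
    ∀ (Y : Type u) (y₁ y₂ : Y), ι.app Y y₁ = ι.app Y y₂ := by
  intro Y y₁ y₂
  obtain ⟨a, b, hab, hne⟩ := Function.not_injective_iff.mp hnotinj
  classical
  have key := NatTrans.app_apply_eq_of_app_apply_eq ι hab (Function.update (fun _ => y₂) a y₁)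
  rwa [Function.update_self, Function.update_of_ne hne.symm] at key

theorem noninjective_unit_implies_all_components_constant
    (F : Type u ⥤ Type u)
    (hconn : Nonempty (F.obj (PUnit : Type u) ≃ PUnit))
    (ι : 𝟭 (Type u) ⟶ F)
    (X : Type u) (x₁ x₂ : X) (hx : x₁ ≠ x₂)
    (hnotinj : ¬ Function.Injective (ι.app X)) :
    ∀ (Y : Type u) (y₁ y₂ : Y), ι.app Y y₁ = ι.app Y y₂ :=
  noninjective_unit_implies_all_components_constant_general F ι X hnotinj
end

section
/- If F is a Set-functor such that for all sets A₁, A₂ the canonical map δ = (Fπ₁, Fπ₂) : F(A₁ × A₂) → F(A₁) × F(A₂) is surjective, then either F(1) has exactly one element or F(X) = ∅ for every set X. -/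
open CategoryTheory

universe u

section

variable (F : Type u ⥤ Type u)

theorem subsingleton_obj_of_surjective_delta (T : Type u) [Subsingleton T]
    (h : Function.Surjective (fun u : F.obj (T × T) =>
      (F.map (TypeCat.ofHom (Prod.fst : T × T → T)) u,
        F.map (TypeCat.ofHom (Prod.snd : T × T → T)) u))) :
    Subsingleton (F.obj T) := by
  refine ⟨fun x y => ?_⟩
  obtain ⟨u, hu⟩ := h (x, y)
  have hfst_eq_snd : (Prod.fst : T × T → T) = Prod.snd := funext fun _ => Subsingleton.elim _ _
  have hx : F.map (TypeCat.ofHom (Prod.fst : T × T → T)) u = x := congrArg Prod.fst hu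
  have hy : F.map (TypeCat.ofHom (Prod.snd : T × T → T)) u = y := congrArg Prod.snd hu
  rw [← hx, ← hy, hfst_eq_snd]

theorem isEmpty_obj_of_isEmpty_obj_punit [IsEmpty (F.obj PUnit)] (X : Type u) :
    IsEmpty (F.obj X) :=
  Function.isEmpty (F.map (TypeCat.ofHom fun _ : X => PUnit.unit))

end

theorem delta_surjective_implies_connected_or_trivial
    (F : Type u ⥤ Type u)
    (h : ∀ A₁ A₂ : Type u,
      Function.Surjective (fun u : F.obj (A₁ × A₂) =>
        (F.map (TypeCat.ofHom (Prod.fst : A₁ × A₂ → A₁)) u, F.map (TypeCat.ofHom (Prod.snd : A₁ × A₂ → A₂)) u))) :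
    Nonempty (F.obj (PUnit : Type u) ≃ PUnit) ∨ ∀ X : Type u, IsEmpty (F.obj X) := by
  rcases isEmpty_or_nonempty (F.obj PUnit) with hempty | hne
  · exact Or.inr (isEmpty_obj_of_isEmpty_obj_punit F)
  · have := subsingleton_obj_of_surjective_delta F PUnit (h PUnit PUnit)
    have : Unique (F.obj PUnit) := uniqueOfSubsingleton hne.some
    exact Or.inl ⟨Equiv.equivPUnit _⟩
end

section
/- Let (F, ι, μ) be a Set-monad (associativity of μ not required, only the two unit laws). If F(1) ≅ 1, then for all sets A₁, A₂ the canonical map δ = (Fπ₁, Fπ₂) : F(A₁ × A₂) → F(A₁) × F(A₂) is surjective. -/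
/-!
A preimage of `(a, b)` is obtained by substituting `b` into `a`: the Kleisli-style element
`μ (F (fun a₁ ↦ F (a₁, ·) b) a)`. Since `F 1` is a point, `F` sends every constant map `c` to the
constant `ι c`, so projecting the inner elements to `A₁` yields `F ι a` and projecting to `A₂`
yields `ι b`; the two unit laws then return `a` and `b`.
-/

open CategoryTheory

universe u

section

variable (F : Type u ⥤ Type u) (ι : 𝟭 (Type u) ⟶ F)

theorem map_const_eq_app [Subsingleton (F.obj PUnit)] {X Y : Type u} (c : Y) (x : F.obj X) :
    F.map (TypeCat.ofHom fun _ => c) x = ι.app Y c := by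
  have hfactor : (TypeCat.ofHom fun _ : X => c) =
      TypeCat.ofHom (fun _ => PUnit.unit) ≫ TypeCat.ofHom fun _ : PUnit => c := rfl
  rw [hfactor, F.map_comp_apply, Subsingleton.elim (F.map _ x) (ι.app PUnit PUnit.unit)]
  exact (NatTrans.naturality_apply ι _ PUnit.unit).symm

variable {F} {A₁ A₂ : Type u}

def substitute (a : F.obj A₁) (b : F.obj A₂) : F.obj (F.obj (A₁ × A₂)) :=
  F.map (TypeCat.ofHom fun a₁ => F.map (TypeCat.ofHom (Prod.mk a₁)) b) a

theorem map_map_fst_substitute [Subsingleton (F.obj PUnit)] (a : F.obj A₁) (b : F.obj A₂) :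
    F.map (F.map (TypeCat.ofHom (Prod.fst : A₁ × A₂ → A₁))) (substitute a b) =
      F.map (ι.app A₁) a := by
  have hcomp : (TypeCat.ofHom fun a₁ => F.map (TypeCat.ofHom (Prod.mk a₁)) b) ≫
      F.map (TypeCat.ofHom (Prod.fst : A₁ × A₂ → A₁)) = ι.app A₁ := by
    ext a₁
    exact (F.map_comp_apply (TypeCat.ofHom (Prod.mk a₁)) (TypeCat.ofHom Prod.fst) b).symm.trans
      (map_const_eq_app F ι a₁ b)
  rw [substitute, ← F.map_comp_apply, hcomp]

theorem map_map_snd_substitute [Subsingleton (F.obj PUnit)] (a : F.obj A₁) (b : F.obj A₂) :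
    F.map (F.map (TypeCat.ofHom (Prod.snd : A₁ × A₂ → A₂))) (substitute a b) =
      ι.app (F.obj A₂) b := by
  have hcomp : (TypeCat.ofHom fun a₁ => F.map (TypeCat.ofHom (Prod.mk a₁)) b) ≫
      F.map (TypeCat.ofHom (Prod.snd : A₁ × A₂ → A₂)) = TypeCat.ofHom fun _ => b := by
    ext a₁
    exact (F.map_comp_apply (TypeCat.ofHom (Prod.mk a₁)) (TypeCat.ofHom Prod.snd) b).symm.trans
      (F.map_id_apply A₂ b)
  rw [substitute, ← F.map_comp_apply, hcomp, map_const_eq_app F ι]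

end

theorem connected_monad_delta_surjective
    (F : Type u ⥤ Type u) (ι : 𝟭 (Type u) ⟶ F) (μ : F ⋙ F ⟶ F)
    (unit1 : ∀ X : Type u, μ.app X ∘ ι.app (F.obj X) = id)
    (unit2 : ∀ X : Type u, μ.app X ∘ F.map (ι.app X) = id)
    (hconn : Nonempty (F.obj (PUnit : Type u) ≃ PUnit))
    (A₁ A₂ : Type u) :
    Function.Surjective (fun u : F.obj (A₁ × A₂) =>
      (F.map (TypeCat.ofHom (Prod.fst : A₁ × A₂ → A₁)) u, F.map (TypeCat.ofHom (Prod.snd : A₁ × A₂ → A₂)) u)) := by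
  have : Subsingleton (F.obj PUnit) := hconn.some.subsingleton
  rintro ⟨a, b⟩
  refine ⟨μ.app _ (substitute a b), Prod.ext ?_ ?_⟩
  · calc F.map (TypeCat.ofHom Prod.fst) (μ.app _ (substitute a b))
        = μ.app A₁ (F.map (F.map (TypeCat.ofHom Prod.fst)) (substitute a b)) :=
          (NatTrans.naturality_apply μ _ _).symm
      _ = μ.app A₁ (F.map (ι.app A₁) a) := by rw [map_map_fst_substitute]
      _ = a := congrFun (unit2 A₁) a
  · calc F.map (TypeCat.ofHom Prod.snd) (μ.app _ (substitute a b))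
        = μ.app A₂ (F.map (F.map (TypeCat.ofHom Prod.snd)) (substitute a b)) :=
          (NatTrans.naturality_apply μ _ _).symm
      _ = μ.app A₂ (ι.app (F.obj A₂) b) := by rw [map_map_snd_substitute]
      _ = b := congrFun (unit1 A₂) b
end

section
/- A (not necessarily associative) Set-monad (F, ι, μ) weakly preserves binary products if and only if F(1) ≅ 1. -/
/-!
If `F(1)` is a singleton, then `F` sends every constant map to the constant `ι c`, and the
pairing `(x, y) ↦ μ (F (a ↦ F (b ↦ (a, b)) y) x)` of `F A₁ × F A₂` into `F (A₁ × A₂)` recovers `x`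
and `y` under `F π₁` and `F π₂` by the two unit laws. Conversely, `π₁ = π₂ : 1 × 1 → 1`, so a
weak product `F(1 × 1)` of `F(1)` with itself forces any two elements of `F(1)` to agree.
-/

open CategoryTheory

universe u

section MonadPair

variable {F : Type u ⥤ Type u}

def monadPair (μ : F ⋙ F ⟶ F) {A₁ A₂ : Type u} (x : F.obj A₁) (y : F.obj A₂) :
    F.obj (A₁ × A₂) :=
  μ.app _ (F.map (TypeCat.ofHom fun a => F.map (TypeCat.ofHom (Prod.mk a)) y) x)

lemma map_monadPair (μ : F ⋙ F ⟶ F) {A₁ A₂ B : Type u} (f : A₁ × A₂ → B)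
    (x : F.obj A₁) (y : F.obj A₂) :
    F.map (TypeCat.ofHom f) (monadPair μ x y) =
      μ.app B (F.map (TypeCat.ofHom fun a => F.map (TypeCat.ofHom (f ∘ Prod.mk a)) y) x) := by
  have hinner : (TypeCat.ofHom fun a => F.map (TypeCat.ofHom (Prod.mk a)) y) ≫
      F.map (TypeCat.ofHom f) =
        TypeCat.ofHom fun a => F.map (TypeCat.ofHom (f ∘ Prod.mk a)) y := by
    ext a
    exact (F.map_comp_apply (TypeCat.ofHom (Prod.mk a)) (TypeCat.ofHom f) y).symm
  rw [monadPair, ← NatTrans.naturality_apply, Functor.comp_map, ← Functor.map_comp_apply,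
    hinner]

lemma map_const_apply_eq_unit [Subsingleton (F.obj PUnit)] (ι : 𝟭 (Type u) ⟶ F)
    {B C : Type u} (c : C) (v : F.obj B) :
    F.map (TypeCat.ofHom fun _ : B => c) v = ι.app C c := by
  have hv : F.map (TypeCat.ofHom fun _ : B => PUnit.unit) v = ι.app PUnit PUnit.unit :=
    Subsingleton.elim _ _
  calc F.map (TypeCat.ofHom fun _ : B => c) v
      = F.map (TypeCat.ofHom fun _ : PUnit.{u + 1} => c)
          (F.map (TypeCat.ofHom fun _ : B => PUnit.unit) v) :=
        F.map_comp_apply (TypeCat.ofHom fun _ : B => PUnit.unit)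
          (TypeCat.ofHom fun _ : PUnit.{u + 1} => c) v
    _ = ι.app C c := by
        rw [hv, ← NatTrans.naturality_apply]
        rfl

variable [Subsingleton (F.obj PUnit)] (ι : 𝟭 (Type u) ⟶ F) (μ : F ⋙ F ⟶ F)

lemma map_fst_monadPair {A₁ A₂ : Type u} (unit_right : μ.app A₁ ∘ F.map (ι.app A₁) = id)
    (x : F.obj A₁) (y : F.obj A₂) :
    F.map (TypeCat.ofHom Prod.fst) (monadPair μ x y) = x := by
  have hinner : (TypeCat.ofHom fun a => F.map (TypeCat.ofHom (Prod.fst ∘ Prod.mk a)) y) =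
      ι.app A₁ := by
    ext a
    exact map_const_apply_eq_unit ι a y
  rw [map_monadPair, hinner]
  exact congrFun unit_right x

lemma map_snd_monadPair {A₁ A₂ : Type u} (unit_left : μ.app A₂ ∘ ι.app (F.obj A₂) = id)
    (x : F.obj A₁) (y : F.obj A₂) :
    F.map (TypeCat.ofHom Prod.snd) (monadPair μ x y) = y := by
  have hinner : (TypeCat.ofHom fun a => F.map (TypeCat.ofHom (Prod.snd ∘ Prod.mk a)) y) =
      TypeCat.ofHom fun _ : A₁ => y := by
    ext a
    exact F.map_id_apply A₂ y
  rw [map_monadPair, hinner, map_const_apply_eq_unit ι]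
  exact congrFun unit_left y

end MonadPair

theorem monad_weakly_preserves_products_iff_connected
    (F : Type u ⥤ Type u) (ι : 𝟭 (Type u) ⟶ F) (μ : F ⋙ F ⟶ F)
    (unit1 : ∀ X : Type u, μ.app X ∘ ι.app (F.obj X) = id)
    (unit2 : ∀ X : Type u, μ.app X ∘ F.map (ι.app X) = id) :
    (∀ (A₁ A₂ : Type u) (Q : Type u) (q₁ : Q → F.obj A₁) (q₂ : Q → F.obj A₂),
      ∃ d : Q → F.obj (A₁ × A₂),
        F.map (TypeCat.ofHom (Prod.fst : A₁ × A₂ → A₁)) ∘ d = q₁ ∧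
        F.map (TypeCat.ofHom (Prod.snd : A₁ × A₂ → A₂)) ∘ d = q₂) ↔
    Nonempty (F.obj (PUnit : Type u) ≃ PUnit) := by
  constructor
  · intro h
    obtain ⟨d, hd₁, hd₂⟩ := h PUnit PUnit (F.obj PUnit × F.obj PUnit) Prod.fst Prod.snd
    -- `Prod.fst = Prod.snd : PUnit × PUnit → PUnit` definitionally, so `hd₁` and `hd₂` agree
    have : Subsingleton (F.obj PUnit) :=
      ⟨fun x y => (congrFun hd₁ (x, y)).symm.trans (congrFun hd₂ (x, y))⟩
    have : Unique (F.obj PUnit) := uniqueOfSubsingleton (ι.app PUnit PUnit.unit)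
    exact ⟨Equiv.equivPUnit _⟩
  · rintro ⟨e⟩ A₁ A₂ Q q₁ q₂
    have := e.subsingleton
    exact ⟨fun q => monadPair μ (q₁ q) (q₂ q),
      funext fun q => map_fst_monadPair ι μ (unit2 A₁) _ _,
      funext fun q => map_snd_monadPair ι μ (unit1 A₂) _ _⟩
end

section
/- Let (F, ι, μ) be a Set-monad satisfying the unit laws, let A₁, A₂ be sets, and let q ∈ F(A₂). Define σ_a : A₂ → A₁ × A₂ by σ_a(b) = (a, b), and τ : A₁ → F(A₁ × A₂) by τ(a) = F(σ_a)(q). If F(1) ≅ 1, then Fπ₁ ∘ τ = ι_{A₁} and Fπ₂ ∘ τ is the constant map on A₁ with value q. -/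
/-!
Since `π₁ ∘ σ_a` is the constant map at `a`, `Fπ₁ (τ a)` is the image of `q` under `F` of a constant
map. Such a map factors through the one-point set, and `F(1)` has a single element, necessarily
`ι(*)`; naturality of `ι` then sends it to `ι(a)`. For the second projection, `π₂ ∘ σ_a = id`.
-/

open CategoryTheory

universe u

theorem CategoryTheory.Functor.map_const_apply_of_subsingleton {F : Type u ⥤ Type u}
    [Subsingleton (F.obj PUnit)] (ι : 𝟭 (Type u) ⟶ F) {X Y : Type u} (y : Y) (x : F.obj X) :
    F.map (TypeCat.ofHom fun _ : X => y) x = ι.app Y y := by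
  have hfactor : (TypeCat.ofHom fun _ : X => y) =
      TypeCat.ofHom (fun _ : X => PUnit.unit) ≫ TypeCat.ofHom (fun _ : PUnit => y) := rfl
  rw [hfactor, F.map_comp_apply, Subsingleton.elim (F.map _ x) (ι.app PUnit PUnit.unit)]
  exact (NatTrans.naturality_apply ι (TypeCat.ofHom fun _ : PUnit => y) PUnit.unit).symm

theorem tau_projections_general
    (F : Type u ⥤ Type u) (ι : 𝟭 (Type u) ⟶ F)
    (hconn : Nonempty (F.obj (PUnit : Type u) ≃ PUnit))
    (A₁ A₂ : Type u) (q : F.obj A₂) :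
    ((fun a : A₁ => F.map (TypeCat.ofHom (Prod.fst : A₁ × A₂ → A₁))
        (F.map (TypeCat.ofHom (fun b : A₂ => (a, b))) q)) = ι.app A₁) ∧
    ((fun a : A₁ => F.map (TypeCat.ofHom (Prod.snd : A₁ × A₂ → A₂))
        (F.map (TypeCat.ofHom (fun b : A₂ => (a, b))) q)) = fun _ : A₁ => q) := by
  have : Subsingleton (F.obj PUnit) := hconn.elim fun e => e.subsingleton
  constructor
  · funext a
    rw [← F.map_comp_apply]
    exact F.map_const_apply_of_subsingleton ι a q
  · funext a
    rw [← F.map_comp_apply]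
    exact F.map_id_apply A₂ q

theorem tau_projections
    (F : Type u ⥤ Type u) (ι : 𝟭 (Type u) ⟶ F) (μ : F ⋙ F ⟶ F)
    (unit1 : ∀ X : Type u, μ.app X ∘ ι.app (F.obj X) = id)
    (unit2 : ∀ X : Type u, μ.app X ∘ F.map (ι.app X) = id)
    (hconn : Nonempty (F.obj (PUnit : Type u) ≃ PUnit))
    (A₁ A₂ : Type u) (q : F.obj A₂) :
    ((fun a : A₁ => F.map (TypeCat.ofHom (Prod.fst : A₁ × A₂ → A₁))
        (F.map (TypeCat.ofHom (fun b : A₂ => (a, b))) q)) = ι.app A₁) ∧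
    ((fun a : A₁ => F.map (TypeCat.ofHom (Prod.snd : A₁ × A₂ → A₂))
        (F.map (TypeCat.ofHom (fun b : A₂ => (a, b))) q)) = fun _ : A₁ => q) :=
  tau_projections_general F ι hconn A₁ A₂ q
end

section
/- Let (F, ι, μ) be a Set-monad with F(1) ≅ 1, let A₁, A₂ be sets and (p, q) ∈ F(A₁) × F(A₂). With τ : A₁ → F(A₁ × A₂) defined by τ(a) = F(b ↦ (a,b))(q), the element t = μ_{A₁×A₂}(F(τ)(p)) satisfies Fπ₁(t) = p and Fπ₂(t) = q. -/
/-!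
Naturality of `μ` moves each projection inside: `t = μ (F τ p)` gives `F π₁ t = μ (F (F π₁ ∘ τ) p)`
and `F π₂ t = μ (F (F π₂ ∘ τ) p)`. Now `F π₂ (τ a) = q`, while `F π₁ (τ a)` is the image of `q`
under a constant map; a constant map factors through `F 1 = {ι ()}`, so `F π₁ ∘ τ = ι` and
likewise `F (fun _ ↦ q) p = ι q`. The two unit laws finish.
-/

open CategoryTheory

universe u

namespace CategoryTheory.Functor

variable {F : Type u ⥤ Type u}

lemma map_const_apply_eq_app [Subsingleton (F.obj PUnit)] (ι : 𝟭 (Type u) ⟶ F) {X Y : Type u}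
    (x : F.obj X) (y : Y) :
    F.map (TypeCat.ofHom fun _ : X => y) x = ι.app Y y := by
  have hfactor : (TypeCat.ofHom fun _ : X => y) =
      TypeCat.ofHom (fun _ : X => PUnit.unit) ≫ TypeCat.ofHom (fun _ : PUnit => y) := rfl
  rw [hfactor, map_comp_apply, Subsingleton.elim (F.map _ x) (ι.app PUnit PUnit.unit)]
  exact (NatTrans.naturality_apply ι _ _).symm

lemma map_app_map_apply (μ : F ⋙ F ⟶ F) {X Y Z : Type u} (τ : X → F.obj Y) (f : Y → Z)
    (p : F.obj X) :
    F.map (TypeCat.ofHom f) (μ.app Y (F.map (TypeCat.ofHom τ) p)) =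
      μ.app Z (F.map (TypeCat.ofHom fun x => F.map (TypeCat.ofHom f) (τ x)) p) := by
  rw [← NatTrans.naturality_apply μ]
  exact congrArg (μ.app Z) (F.map_comp_apply _ _ p).symm

end CategoryTheory.Functor

open CategoryTheory.Functor in
theorem element_t_projects_to_p_and_q
    (F : Type u ⥤ Type u) (ι : 𝟭 (Type u) ⟶ F) (μ : F ⋙ F ⟶ F)
    (unit1 : ∀ X : Type u, μ.app X ∘ ι.app (F.obj X) = id)
    (unit2 : ∀ X : Type u, μ.app X ∘ F.map (ι.app X) = id)
    (hconn : Nonempty (F.obj (PUnit : Type u) ≃ PUnit))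
    (A₁ A₂ : Type u) (p : F.obj A₁) (q : F.obj A₂) :
    F.map (TypeCat.ofHom (Prod.fst : A₁ × A₂ → A₁))
        (μ.app (A₁ × A₂) (F.map (TypeCat.ofHom fun a : A₁ => F.map (TypeCat.ofHom fun b : A₂ => (a, b)) q) p)) = p ∧
    F.map (TypeCat.ofHom (Prod.snd : A₁ × A₂ → A₂))
        (μ.app (A₁ × A₂) (F.map (TypeCat.ofHom fun a : A₁ => F.map (TypeCat.ofHom fun b : A₂ => (a, b)) q) p)) = q := by
  have : Subsingleton (F.obj PUnit) := hconn.some.subsingleton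
  constructor
  · have hfst : (fun a : A₁ => F.map (TypeCat.ofHom Prod.fst)
        (F.map (TypeCat.ofHom fun b : A₂ => (a, b)) q)) = ι.app A₁ := by
      funext a
      rw [← map_comp_apply]
      exact map_const_apply_eq_app ι q a
    rw [map_app_map_apply, hfst]
    exact congrFun (unit2 A₁) p
  · have hsnd : (fun a : A₁ => F.map (TypeCat.ofHom Prod.snd)
        (F.map (TypeCat.ofHom fun b : A₂ => (a, b)) q)) = fun _ => q := by
      funext a
      rw [← map_comp_apply]
      exact F.map_id_apply A₂ q
    rw [map_app_map_apply, hsnd, map_const_apply_eq_app ι]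
    exact congrFun (unit1 A₂) q
end

section
/- For the functor T with T(X) = X²/Δ (diagonal collapsed to ⊥) and the constant maps c₀, c₁ : X → {0,1} for a set X with at least two elements, T does not weakly preserve the pullback of c₀ and c₁: the pullback of c₀ and c₁ is ∅, but the pullback of T(c₀) and T(c₁) is T(X) × T(X) ≠ ∅, and there is no surjection from T(∅) = ∅ onto it. -/
/-- `T X = X²/Δ`: the quotient of `X × X` identifying all diagonal pairs with each other. -/
def TObj (X : Type) : Type :=
  Quot (fun p q : X × X => p.1 = p.2 ∧ q.1 = q.2)

/-- The action of `T` on maps: `T f` is induced by `f × f` on the quotient. -/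
def TMap {X Y : Type} (f : X → Y) : TObj X → TObj Y :=
  Quot.map (Prod.map f f) (fun _ _ h => ⟨congrArg f h.1, congrArg f h.2⟩)

/-- `T` does not weakly preserve the pullback of the two distinct constant maps
`c₀, c₁ : X → Bool` when `X` has at least two elements: the pullback of `c₀` and `c₁`
is empty, both `T c₀` and `T c₁` are the constant map with value `⊥`, their pullback
`T X × T X` is nonempty, and there is no surjection from `T ∅ = ∅` onto it. -/
theorem T_does_not_weakly_preserve_pullback_of_constants
    (X : Type) (x₁ x₂ : X) (hx : x₁ ≠ x₂) :
    IsEmpty {p : X × X // (fun _ : X => false) p.1 = (fun _ : X => true) p.2} ∧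
    (∃ bot : TObj Bool,
      TMap (fun _ : X => false) = (fun _ : TObj X => bot) ∧
      TMap (fun _ : X => true) = (fun _ : TObj X => bot)) ∧
    Nonempty (TObj X × TObj X) ∧
    IsEmpty (TObj {p : X × X // (fun _ : X => false) p.1 = (fun _ : X => true) p.2}) ∧
    ¬ ∃ d : TObj {p : X × X // (fun _ : X => false) p.1 = (fun _ : X => true) p.2} →
        TObj X × TObj X, Function.Surjective d := by
  have hP : IsEmpty {p : X × X // (fun _ : X => false) p.1 = (fun _ : X => true) p.2} :=
    ⟨fun p => by simpa using p.2⟩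
  have hTP : IsEmpty (TObj {p : X × X // (fun _ : X => false) p.1 = (fun _ : X => true) p.2}) :=
    ⟨fun t => Quot.ind (β := fun _ => False) (fun p => hP.elim p.1) t⟩
  refine ⟨hP, ⟨Quot.mk _ (false, false), ?_, ?_⟩,
    ⟨Quot.mk _ (x₁, x₂), Quot.mk _ (x₁, x₂)⟩, hTP, ?_⟩
  · funext t
    induction t using Quot.ind with
    | _ p => rfl
  · funext t
    induction t using Quot.ind with
    | _ p => exact Quot.sound ⟨rfl, rfl⟩
  · rintro ⟨d, hd⟩
    obtain ⟨t, -⟩ := hd (Quot.mk _ (x₁, x₂), Quot.mk _ (x₁, x₂))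
    exact hTP.elim t
end
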